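/- For the Heisenberg group with q₀ = (0,0,0), the set I⁺(q₀) ∩ I⁻(q), where q = (x₁, y₁, z₁) with x₁ > 0, is contained in the box (0, x₁) × (-x₁, x₁) × (-x₁²/4, x₁²/4). -/
import Mathlib


/-- Heisenberg group law. -/
noncomputable def hmul (a b : ℝ × ℝ × ℝ) : ℝ × ℝ × ℝ :=
  (a.1 + b.1, a.2.1 + b.2.1, a.2.2 + b.2.2 + (a.1 * b.2.1 - b.1 * a.2.1) / 2)

/-- The chronological future of the identity. -/
def IplusZero : Set (ℝ × ℝ × ℝ) :=
  {p | -p.1 ^ 2 + p.2.1 ^ 2 + 4 * |p.2.2| < 0 ∧ 0 < p.1}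

/-- The chronological past of the identity. -/
def IminusZero : Set (ℝ × ℝ × ℝ) :=
  {p | -p.1 ^ 2 + p.2.1 ^ 2 + 4 * |p.2.2| < 0 ∧ p.1 < 0}

theorem Iplus_inter_Iminus_subset_box (x₁ y₁ z₁ : ℝ) (hx : 0 < x₁) :
    IplusZero ∩ (hmul (x₁, y₁, z₁) '' IminusZero) ⊆
      Set.Ioo (0 : ℝ) x₁ ×ˢ Set.Ioo (-x₁) x₁ ×ˢ Set.Ioo (-(x₁ ^ 2 / 4)) (x₁ ^ 2 / 4) := by
  rintro p ⟨⟨h1, h2⟩, r, ⟨h3, h4⟩, rfl⟩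
  simp only [hmul, IplusZero, Set.mem_setOf_eq] at h1 h2 h3 h4 ⊢
  set x := x₁ + r.1 with hxdef
  have hxlt : x < x₁ := by simp [hxdef]; linarith
  have hz : 0 ≤ |x₁ + r.2.2 * 0| := abs_nonneg _
  have habsy : |x₁ * 0 + r.2.1| ≥ 0 := abs_nonneg _
  have hzz : 0 ≤ |z₁ + r.2.2 + (x₁ * r.2.1 - r.1 * y₁) / 2| := abs_nonneg _
  have hyy : (y₁ + r.2.1) ^ 2 < x ^ 2 := by nlinarith
  refine ⟨⟨h2, hxlt⟩, ⟨?_, ?_⟩, ?_, ?_⟩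
  · nlinarith [sq_nonneg (y₁ + r.2.1 + x)]
  · nlinarith [sq_nonneg (x - (y₁ + r.2.1))]
  · have : |z₁ + r.2.2 + (x₁ * r.2.1 - r.1 * y₁) / 2| < x₁ ^ 2 / 4 := by nlinarith
    have := neg_lt_of_abs_lt this
    linarith
  · have : |z₁ + r.2.2 + (x₁ * r.2.1 - r.1 * y₁) / 2| < x₁ ^ 2 / 4 := by nlinarith
    have := lt_of_abs_lt this
    linarith
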